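/- arXiv:1712.08087 — 4 statements merged into one kernel-verified Lean document; each statement's English description precedes it below -/
import Mathlib

section
/- Let t_V, t_D ≥ 0, let q_1, …, q_m ∈ [0,1], and let 1 ≤ l ≤ m−1. Let q̃ be the sequence obtained from q by exchanging the entries at positions l and l+1. Then T(q_1, …, q_m) − T(q̃_1, …, q̃_m) = t_V · (q_l − q_{l+1}) · ∏_{j=1}^{l-1} q_j. -/
/-- Expected episode duration: `expDur tV tD [q₁, …, qₘ]` is the expected annotation time of
the strategy `VᵐD` that verifies boxes with rejection probabilities `q₁, …, qₘ` in order
(each verification taking time `tV`) and draws manually (taking time `tD`) if all are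
rejected: `expDur tV tD [] = tD` and `expDur tV tD (q :: qs) = tV + q * expDur tV tD qs`. -/
noncomputable def expDur (tV tD : ℝ) : List ℝ → ℝ
  | [] => tD
  | q :: qs => tV + q * expDur tV tD qs

/-
Prepending a box `q` acts on the duration as the affine map `T ↦ t_V + q T`, so the prefix
`q_1, …, q_{l-1}` scales any difference of tail durations by `∏_{j<l} q_j`. For the two
swapped boxes alone the difference is `(t_V + x (t_V + y T)) - (t_V + y (t_V + x T)) = t_V (x - y)`.
-/

theorem expDur_append (tV tD : ℝ) (A L : List ℝ) :
    expDur tV tD (A ++ L) = expDur tV (expDur tV tD L) A := by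
  induction A with
  | nil => rfl
  | cons a A ih => simp only [List.cons_append, expDur, ih]

theorem expDur_sub_expDur (tV c c' : ℝ) (A : List ℝ) :
    expDur tV c A - expDur tV c' A = A.prod * (c - c') := by
  induction A with
  | nil => simp only [expDur, List.prod_nil, one_mul]
  | cons a A ih =>
    simp only [expDur, List.prod_cons]
    linear_combination a * ih

theorem expDur_swap_head (tV tD x y : ℝ) (B : List ℝ) :
    expDur tV tD (x :: y :: B) - expDur tV tD (y :: x :: B) = tV * (x - y) := by
  simp only [expDur]
  ring

-- The swapped positions are `l = A.length + 1` and `l + 1`.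
theorem expDur_swap_adjacent_general (tV tD : ℝ)
    (A B : List ℝ) (x y : ℝ) :
    expDur tV tD (A ++ x :: y :: B) - expDur tV tD (A ++ y :: x :: B)
      = tV * (x - y) * A.prod := by
  rw [expDur_append, expDur_append, expDur_sub_expDur, expDur_swap_head, mul_comm]

/-- Exchanging the adjacent rejection probabilities at positions `l` and `l+1`
(here `l = A.length + 1`, so `1 ≤ l ≤ m - 1`) changes the expected duration by
`t_V · (q_l - q_{l+1}) · ∏_{j=1}^{l-1} q_j`. -/
theorem expDur_swap_adjacent (tV tD : ℝ) (htV : 0 ≤ tV) (htD : 0 ≤ tD)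
    (A B : List ℝ) (x y : ℝ)
    (hA : ∀ q ∈ A, 0 ≤ q ∧ q ≤ 1) (hB : ∀ q ∈ B, 0 ≤ q ∧ q ≤ 1)
    (hx : 0 ≤ x ∧ x ≤ 1) (hy : 0 ≤ y ∧ y ≤ 1) :
    expDur tV tD (A ++ x :: y :: B) - expDur tV tD (A ++ y :: x :: B)
      = tV * (x - y) * A.prod :=
  expDur_swap_adjacent_general tV tD A B x y
end

section
/- Let t_V > 0, t_D ≥ 0, let q_1, …, q_m ∈ (0,1], and let 1 ≤ l ≤ m−1 with q_l > q_{l+1}. Let q̃ be the sequence obtained from q by exchanging the entries at positions l and l+1. Then T(q̃_1, …, q̃_m) < T(q_1, …, q_m); that is, a sequence that is not sorted in increasing order of rejection probability cannot minimize the expected episode duration. -/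
theorem expDur_strictMono (tV : ℝ) {A : List ℝ} (hA : ∀ q ∈ A, 0 < q) :
    StrictMono fun tD => expDur tV tD A := by
  induction A with
  | nil => exact fun _ _ h => h
  | cons a A ih =>
    intro d d' h
    have ha : 0 < a := hA a List.mem_cons_self
    have hrest := ih (fun q hq => hA q (List.mem_cons_of_mem a hq)) h
    simp only [expDur]
    gcongr

theorem expDur_cons_cons_lt {tV : ℝ} (htV : 0 < tV) (tD : ℝ) (B : List ℝ) {x y : ℝ}
    (hxy : y < x) : expDur tV tD (y :: x :: B) < expDur tV tD (x :: y :: B) := by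
  have hdiff : expDur tV tD (x :: y :: B) - expDur tV tD (y :: x :: B) = (x - y) * tV := by
    simp only [expDur]
    ring
  linarith [mul_pos (sub_pos.2 hxy) htV]

theorem expDur_swap_adjacent_lt_general (tV tD : ℝ) (htV : 0 < tV)
    (A B : List ℝ) (x y : ℝ)
    (hA : ∀ q ∈ A, 0 < q ∧ q ≤ 1) (hxy : y < x) :
    expDur tV tD (A ++ y :: x :: B) < expDur tV tD (A ++ x :: y :: B) := by
  rw [expDur_append, expDur_append]
  exact expDur_strictMono tV (fun q hq => (hA q hq).1) (expDur_cons_cons_lt htV tD B hxy)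

/-- If `t_V > 0`, all rejection probabilities lie in `(0,1]`, and the adjacent entries at
positions `l` and `l+1` satisfy `q_l > q_{l+1}`, then swapping them strictly decreases the
expected episode duration: an unsorted sequence cannot be optimal. -/
theorem expDur_swap_adjacent_lt (tV tD : ℝ) (htV : 0 < tV) (htD : 0 ≤ tD)
    (A B : List ℝ) (x y : ℝ)
    (hA : ∀ q ∈ A, 0 < q ∧ q ≤ 1) (hB : ∀ q ∈ B, 0 < q ∧ q ≤ 1)
    (hx : 0 < x ∧ x ≤ 1) (hy : 0 < y ∧ y ≤ 1) (hxy : y < x) :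
    expDur tV tD (A ++ y :: x :: B) < expDur tV tD (A ++ x :: y :: B) :=
  expDur_swap_adjacent_lt_general tV tD htV A B x y hA hxy
end

section
/- Let t_V, t_D ≥ 0 and let q_1, …, q_m ∈ [0,1]. Among all orderings of the multiset {q_1, …, q_m}, the expected episode duration T is minimized by the ordering sorted in increasing order of rejection probability: for every permutation σ of {1, …, m}, T(q̄_1, …, q̄_m) ≤ T(q_{σ(1)}, …, q_{σ(m)}), where q̄_1 ≤ q̄_2 ≤ … ≤ q̄_m is the sorted rearrangement. -/
section

variable {tV tD : ℝ}

theorem expDur_cons_le_cons {a : ℝ} (ha : 0 ≤ a) {l l' : List ℝ}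
    (h : expDur tV tD l ≤ expDur tV tD l') : expDur tV tD (a :: l) ≤ expDur tV tD (a :: l') := by
  simp only [expDur]
  gcongr

theorem expDur_swap_le (htV : 0 ≤ tV) {a b : ℝ} (hab : a ≤ b) (l : List ℝ) :
    expDur tV tD (a :: b :: l) ≤ expDur tV tD (b :: a :: l) := by
  simp only [expDur]
  nlinarith

theorem expDur_orderedInsert_le (htV : 0 ≤ tV) (a : ℝ) {l : List ℝ} (hl : ∀ q ∈ l, 0 ≤ q) :
    expDur tV tD (l.orderedInsert (· ≤ ·) a) ≤ expDur tV tD (a :: l) := by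
  induction l with
  | nil => rfl
  | cons b l ih =>
    simp only [List.forall_mem_cons] at hl
    by_cases hab : a ≤ b
    · simp [List.orderedInsert, hab]
    · rw [List.orderedInsert_cons, if_neg hab]
      calc expDur tV tD (b :: l.orderedInsert (· ≤ ·) a)
          ≤ expDur tV tD (b :: a :: l) := expDur_cons_le_cons hl.1 (ih hl.2)
        _ ≤ expDur tV tD (a :: b :: l) := expDur_swap_le htV (le_of_not_ge hab) l

theorem expDur_insertionSort_le (htV : 0 ≤ tV) {l : List ℝ} (hl : ∀ q ∈ l, 0 ≤ q) :
    expDur tV tD (l.insertionSort (· ≤ ·)) ≤ expDur tV tD l := by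
  induction l with
  | nil => rfl
  | cons a l ih =>
    simp only [List.forall_mem_cons] at hl
    calc expDur tV tD ((l.insertionSort (· ≤ ·)).orderedInsert (· ≤ ·) a)
        ≤ expDur tV tD (a :: l.insertionSort (· ≤ ·)) :=
          expDur_orderedInsert_le htV a fun q hq => hl.2 q ((l.perm_insertionSort _).subset hq)
      _ ≤ expDur tV tD (a :: l) := expDur_cons_le_cons hl.1 (ih hl.2)

end

theorem expDur_sorted_min_general (tV tD : ℝ) (htV : 0 ≤ tV)
    (L L' : List ℝ) (hL : ∀ q ∈ L, 0 ≤ q ∧ q ≤ 1)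
    (hsorted : L.Pairwise (· ≤ ·)) (hperm : L.Perm L') :
    expDur tV tD L ≤ expDur tV tD L' := by
  have hL' : ∀ q ∈ L', 0 ≤ q := fun q hq => (hL q (hperm.mem_iff.mpr hq)).1
  have hL_eq : L = L'.insertionSort (· ≤ ·) :=
    (hperm.trans (L'.perm_insertionSort _).symm).eq_of_pairwise' hsorted
      (L'.pairwise_insertionSort _)
  rw [hL_eq]
  exact expDur_insertionSort_le htV hL'

/-- Among all orderings of a given multiset of rejection probabilities, the expected episode
duration is minimized by the ordering sorted increasingly. -/
theorem expDur_sorted_min (tV tD : ℝ) (htV : 0 ≤ tV) (htD : 0 ≤ tD)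
    (L L' : List ℝ) (hL : ∀ q ∈ L, 0 ≤ q ∧ q ≤ 1)
    (hsorted : L.Pairwise (· ≤ ·)) (hperm : L.Perm L') :
    expDur tV tD L ≤ expDur tV tD L' :=
  expDur_sorted_min_general tV tD htV L L' hL hsorted hperm
end

section
/- Let 0 ≤ t_V and 0 < t_D, let q_1, …, q_n ∈ [0,1] with q_1 ≤ q_2 ≤ … ≤ q_n, write p_i = 1 − q_i, and let k be the number of indices i with p_i > t_V / t_D. Then the sequence m ↦ T(q_1, …, q_m) for m = 0, 1, …, n is non-increasing on {0, …, k} and non-decreasing on {k, …, n}; in particular it attains its minimum at m = k. -/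
lemma expDur_append_singleton (tV tD x : ℝ) (l : List ℝ) :
    expDur tV tD (l ++ [x]) = expDur tV tD l + l.prod * (tV + x * tD - tD) := by
  induction l with
  | nil => simp [expDur]
  | cons a l ih => simp [expDur, ih]; ring

/-- With rejection probabilities sorted increasingly and `k` the number of boxes with
acceptance probability exceeding `t_V / t_D`, the map `m ↦ T(q₁, …, qₘ)` is non-increasing
on `{0, …, k}`, non-decreasing on `{k, …, n}`, and attains its minimum at `m = k`. -/
theorem expDur_unimodal (tV tD : ℝ) (htV : 0 ≤ tV) (htD : 0 < tD)
    (n : ℕ) (q : ℕ → ℝ)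
    (hq : ∀ i < n, 0 ≤ q i ∧ q i ≤ 1)
    (hsorted : ∀ i j, i ≤ j → j < n → q i ≤ q j)
    (k : ℕ) (hk : k = ((Finset.range n).filter fun i => tV / tD < 1 - q i).card) :
    (∀ a b, a ≤ b → b ≤ k →
      expDur tV tD ((List.range b).map q) ≤ expDur tV tD ((List.range a).map q)) ∧
    (∀ a b, k ≤ a → a ≤ b → b ≤ n →
      expDur tV tD ((List.range a).map q) ≤ expDur tV tD ((List.range b).map q)) ∧
    (∀ m ≤ n, expDur tV tD ((List.range k).map q) ≤ expDur tV tD ((List.range m).map q)) := by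
  set S := (Finset.range n).filter fun i => tV / tD < 1 - q i with hS
  set f := fun m => expDur tV tD ((List.range m).map q) with hf
  have hkn : k ≤ n := by
    rw [hk]
    simpa using Finset.card_filter_le (Finset.range n) fun i => tV / tD < 1 - q i
  -- downward closedness
  have hdc : ∀ i j, i ≤ j → j ∈ S → i ∈ S := by
    intro i j hij hjS
    rw [hS, Finset.mem_filter, Finset.mem_range] at hjS ⊢
    refine ⟨lt_of_le_of_lt hij hjS.1, lt_of_lt_of_le hjS.2 ?_⟩
    have := hsorted i j hij hjS.1
    linarith
  have key1 : ∀ i < k, tV / tD < 1 - q i := by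
    intro i hik
    by_contra h
    push_neg at h
    have hiS : i ∉ S := by
      rw [hS, Finset.mem_filter]
      intro hi
      exact absurd hi.2 (not_lt.mpr h)
    have hsub : S ⊆ Finset.range i := by
      intro j hj
      rw [Finset.mem_range]
      by_contra hji
      push_neg at hji
      exact hiS (hdc i j hji hj)
    have := Finset.card_le_card hsub
    rw [Finset.card_range] at this
    omega
  have key2 : ∀ i, k ≤ i → i < n → 1 - q i ≤ tV / tD := by
    intro i hki hin
    by_contra h
    push_neg at h
    have hiS : i ∈ S := by
      rw [hS, Finset.mem_filter, Finset.mem_range]; exact ⟨hin, h⟩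
    have hsub : Finset.range (i + 1) ⊆ S := by
      intro j hj
      rw [Finset.mem_range] at hj
      exact hdc j i (Nat.lt_succ_iff.mp hj) hiS
    have := Finset.card_le_card hsub
    rw [Finset.card_range] at this
    omega
  -- step formula
  have hstep : ∀ m, f (m + 1) =
      f m + ((List.range m).map q).prod * (tV + q m * tD - tD) := by
    intro m
    rw [hf]
    simp only [List.range_succ, List.map_append, List.map_cons, List.map_nil]
    exact expDur_append_singleton tV tD (q m) ((List.range m).map q)
  have hP : ∀ m ≤ n, 0 ≤ ((List.range m).map q).prod := by
    intro m hmn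
    apply List.prod_nonneg
    intro x hx
    rw [List.mem_map] at hx
    obtain ⟨i, hi, rfl⟩ := hx
    rw [List.mem_range] at hi
    exact (hq i (lt_of_lt_of_le hi hmn)).1
  have hdown : ∀ m < k, f (m + 1) ≤ f m := by
    intro m hmk
    have h1 : tV / tD < 1 - q m := key1 m hmk
    have h2 : tV < (1 - q m) * tD := (div_lt_iff₀ htD).mp h1
    have h3 : tV + q m * tD - tD ≤ 0 := by nlinarith
    have h4 := hP m (by omega)
    rw [hstep m]
    nlinarith
  have hup : ∀ m, k ≤ m → m < n → f m ≤ f (m + 1) := by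
    intro m hkm hmn
    have h1 : 1 - q m ≤ tV / tD := key2 m hkm hmn
    have h2 : (1 - q m) * tD ≤ tV := by
      rw [← le_div_iff₀ htD]; exact h1
    have h3 : 0 ≤ tV + q m * tD - tD := by nlinarith
    have h4 := hP m (le_of_lt hmn)
    rw [hstep m]
    nlinarith
  have dec : ∀ a b, a ≤ b → b ≤ k → f b ≤ f a := by
    intro a b
    induction b with
    | zero => intro hab _; interval_cases a; rfl
    | succ b ih =>
      intro hab hbk
      rcases Nat.eq_or_lt_of_le hab with h | h
      · rw [h]
      · exact le_trans (hdown b (by omega)) (ih (by omega) (by omega))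
  have inc : ∀ a b, k ≤ a → a ≤ b → b ≤ n → f a ≤ f b := by
    intro a b hka
    induction b with
    | zero => intro hab _; interval_cases a; rfl
    | succ b ih =>
      intro hab hbn
      rcases Nat.eq_or_lt_of_le hab with h | h
      · rw [h]
      · exact le_trans (ih (by omega) (by omega)) (hup b (by omega) (by omega))
  refine ⟨dec, inc, ?_⟩
  intro m hmn
  rcases le_or_gt m k with h | h
  · exact dec m k h le_rfl
  · exact inc k m le_rfl (le_of_lt h) hmn
end
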